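/- Let 0 < q < 1, r ≥ 1 an integer, and z a complex number with Re z > 0. Then G_r(z+1;q) = G_{r-1}(z;q) · G_r(z;q), where G_r is the q-analogue of the multiple gamma function. -/

import Mathlib

open Finset Filter Topology

/-- Generalized binomial coefficient C(z,k) = z(z-1)⋯(z-k+1)/k!. -/
noncomputable def genBinom (z : ℂ) (k : ℕ) : ℂ :=
  (∏ i ∈ Finset.range k, (z - i)) / (Nat.factorial k)

/-- g_r(z,n) = ∑_{m=1}^{r-1} (-1)^{m-1} C(z, r-m) C(n+m-2, m-1), with g_1 = 0. -/
noncomputable def qg (r : ℕ) (z : ℂ) (n : ℕ) : ℂ :=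
  ∑ m ∈ Finset.Icc 1 (r - 1),
    (-1 : ℂ) ^ (m - 1) * genBinom z (r - m) * (Nat.choose (n + m - 2) (m - 1))

/-- The q-analogue of the multiple gamma function: `qMG q r z = G_r(z; q)`.
For `r = 0` it is the q-number `[z] = (1-q^z)/(1-q)`; for `r ≥ 1`,
`G_r(z+1;q) = (1-q)^{-C(z,r)} ∏_{n≥1} ((1-q^{z+n})/(1-q^n))^{(-1)^r C(n+r-2,r-1)} (1-q^n)^{g_r(z,n)}`. -/
noncomputable def qMG (q : ℝ) (r : ℕ) (z : ℂ) : ℂ :=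
  if r = 0 then (1 - (q : ℂ) ^ z) / (1 - (q : ℂ)) else
    (1 - (q : ℂ)) ^ (-genBinom (z - 1) r) *
      ∏' n : ℕ,
        (((1 - (q : ℂ) ^ ((z - 1) + (n + 1))) / (1 - (q : ℂ) ^ (n + 1)))
            ^ ((-1 : ℂ) ^ r * (Nat.choose (n + 1 + r - 2) (r - 1))) *
          (1 - (q : ℂ) ^ (n + 1)) ^ (qg r (z - 1) (n + 1)))

/-!
Taking principal logarithms factor by factor writes `G_r(w + 1; q)` as the exponential of
`-C(w, r) log (1 - q)` plus two absolutely convergent series in `log (1 - q^(w+n+1))` and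
`log (1 - q^(n+1))` whose coefficients grow polynomially in `n`. The functional equation then
reduces to three Pascal-type identities: for `C(w, r)`, for the exponents `(-1)^r C(n+r-2, r-1)`
(after shifting the first series by one index), and for `g_r`.
-/

open Complex Asymptotics

lemma genBinom_eq_choose (z : ℂ) (k : ℕ) : genBinom z k = Ring.choose z k := by
  rw [Ring.choose_eq_smul, genBinom, smul_eq_mul, div_eq_inv_mul,
    ← descPochhammer_eval_eq_prod_range, ← Polynomial.aeval_eq_smeval,
    ← descPochhammer_map (algebraMap ℤ ℂ), Polynomial.eval_map_algebraMap]

lemma genBinom_succ_succ (z : ℂ) (k : ℕ) :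
    genBinom (z + 1) (k + 1) = genBinom z k + genBinom z (k + 1) := by
  simp only [genBinom_eq_choose, Ring.choose_succ_succ]

/-- The exponent `(-1)^r C(n+r-2, r-1)` of the `n`-th factor of `G_r`, with `n` shifted down by one
as in `qMG`. -/
noncomputable def qMGExponent (r n : ℕ) : ℂ := (-1) ^ r * ((n + 1 + r - 2).choose (r - 1) : ℕ)

lemma qMGExponent_one (n : ℕ) : qMGExponent 1 n = -1 := by
  simp [qMGExponent]

lemma qMGExponent_add_two_zero (s : ℕ) : qMGExponent (s + 1) 0 + qMGExponent (s + 2) 0 = 0 := by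
  simp only [qMGExponent, show 0 + 1 + (s + 1) - 2 = s by omega,
    show 0 + 1 + (s + 2) - 2 = s + 1 by omega, show s + 2 - 1 = s + 1 from rfl,
    Nat.add_sub_cancel, Nat.choose_self, pow_succ]
  ring

lemma qMGExponent_add_two_succ (s n : ℕ) :
    qMGExponent (s + 1) (n + 1) + qMGExponent (s + 2) (n + 1) = qMGExponent (s + 2) n := by
  simp only [qMGExponent, show n + 1 + 1 + (s + 1) - 2 = n + s + 1 by omega,
    show n + 1 + 1 + (s + 2) - 2 = n + s + 1 + 1 by omega,
    show n + 1 + (s + 2) - 2 = n + s + 1 by omega, show s + 2 - 1 = s + 1 from rfl,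
    Nat.add_sub_cancel, Nat.choose_succ_succ (n + s + 1) s, pow_succ]
  push_cast
  ring

lemma qg_one (z : ℂ) (n : ℕ) : qg 1 z n = 0 := by
  simp [qg]

lemma qg_add_two_add_one (s : ℕ) (z : ℂ) (n : ℕ) :
    qg (s + 2) (z + 1) (n + 1) = qg (s + 1) z (n + 1) + qg (s + 2) z (n + 1)
      - qMGExponent (s + 1) n := by
  have hpascal : ∀ m ∈ Icc 1 (s + 1),
      (-1 : ℂ) ^ (m - 1) * genBinom (z + 1) (s + 2 - m) * ((n + 1 + m - 2).choose (m - 1) : ℕ)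
        = (-1 : ℂ) ^ (m - 1) * genBinom z (s + 1 - m) * ((n + 1 + m - 2).choose (m - 1) : ℕ)
          + (-1 : ℂ) ^ (m - 1) * genBinom z (s + 2 - m) * ((n + 1 + m - 2).choose (m - 1) : ℕ) := by
    intro m hm
    rw [show s + 2 - m = s + 1 - m + 1 by grind, genBinom_succ_succ]
    ring
  simp only [qg, qMGExponent, show s + 2 - 1 = s + 1 from rfl, Nat.add_sub_cancel,
    sum_congr rfl hpascal, sum_add_distrib, sum_Icc_succ_top (by omega : 1 ≤ s + 1),
    show n + 1 + (s + 1) - 2 = n + s by omega, Nat.sub_self]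
  simp only [genBinom, range_zero, prod_empty, Nat.factorial_zero, Nat.cast_one, div_one, pow_succ]
  ring

lemma isBigO_choose (a : ℕ) {b k : ℕ} (hbk : b ≤ k) :
    (fun n : ℕ => (((n + a).choose b : ℕ) : ℂ)) =O[atTop] fun n => (n : ℝ) ^ k := by
  refine IsBigO.of_bound (2 ^ k) ?_
  filter_upwards [eventually_ge_atTop (max a 1)] with n hn
  have hchoose : (n + a).choose b ≤ 2 ^ k * n ^ k := calc
    (n + a).choose b ≤ (n + a) ^ b := Nat.choose_le_pow _ _
    _ ≤ (2 * n) ^ b := Nat.pow_le_pow_left (by omega) b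
    _ ≤ (2 * n) ^ k := Nat.pow_le_pow_right (by omega) hbk
    _ = 2 ^ k * n ^ k := mul_pow _ _ _
  simpa using (Nat.cast_le (α := ℝ)).2 hchoose

lemma isBigO_qMGExponent {r k : ℕ} (hr : r ≠ 0) (hrk : r ≤ k + 1) :
    qMGExponent r =O[atTop] fun n => (n : ℝ) ^ k := by
  refine ((isBigO_choose (r - 1) (b := r - 1) (by omega)).const_mul_left ((-1 : ℂ) ^ r)).congr_left
    fun n => ?_
  rw [qMGExponent, show n + 1 + r - 2 = n + (r - 1) by omega]

lemma isBigO_qg {r k : ℕ} (z : ℂ) (hrk : r ≤ k + 2) :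
    (fun n => qg r z (n + 1)) =O[atTop] fun n => (n : ℝ) ^ k := by
  refine IsBigO.fun_sum fun m hm => ?_
  have hm := Finset.mem_Icc.1 hm
  simp only [show ∀ n, n + 1 + m - 2 = n + (m - 1) from fun n => by omega]
  exact (isBigO_choose (m - 1) (by omega)).const_mul_left _

lemma isBigO_log_one_sub : (fun u : ℂ => log (1 - u)) =O[𝓝 0] id := by
  refine IsBigO.of_bound (3 / 2) ?_
  filter_upwards [Metric.closedBall_mem_nhds (0 : ℂ) one_half_pos] with u hu
  simpa [sub_eq_add_neg] using norm_log_one_add_half_le_self (z := -u) (by simpa using hu)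

lemma summable_mul_log_one_sub {e u : ℕ → ℂ} {k : ℕ} {ρ : ℝ} (hρ0 : 0 ≤ ρ) (hρ1 : ρ < 1)
    (he : e =O[atTop] fun n => (n : ℝ) ^ k) (hu : u =O[atTop] fun n => ρ ^ n) :
    Summable fun n => e n * log (1 - u n) := by
  have hu0 : Tendsto u atTop (𝓝 0) :=
    hu.trans_tendsto (tendsto_pow_atTop_nhds_zero_of_lt_one hρ0 hρ1)
  refine summable_of_isBigO_nat (summable_pow_mul_geometric_of_norm_lt_one k ?_)
    (he.mul ((isBigO_log_one_sub.comp_tendsto hu0).trans hu))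
  rwa [Real.norm_of_nonneg hρ0]

lemma isBigO_cpow_add_natCast {q : ℝ} (hq : 0 < q) (w : ℂ) :
    (fun n : ℕ => (q : ℂ) ^ (w + n)) =O[atTop] fun n => q ^ n := by
  refine IsBigO.of_bound (q ^ w.re) (Eventually.of_forall fun n => ?_)
  rw [norm_cpow_eq_rpow_re_of_pos hq, add_re, natCast_re, Real.rpow_add hq, Real.rpow_natCast,
    Real.norm_of_nonneg (by positivity)]

lemma summable_mul_log_one_sub_cpow {q : ℝ} (hq : 0 < q) (hq1 : q < 1) (w : ℂ) {e : ℕ → ℂ}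
    {k : ℕ} (he : e =O[atTop] fun n => (n : ℝ) ^ k) :
    Summable fun n : ℕ => e n * log (1 - (q : ℂ) ^ (w + (n + 1))) :=
  summable_mul_log_one_sub hq.le hq1 he
    ((isBigO_cpow_add_natCast hq (w + 1)).congr_left fun n => by ring_nf)

lemma summable_mul_log_one_sub_pow {q : ℝ} (hq : 0 < q) (hq1 : q < 1) {e : ℕ → ℂ}
    {k : ℕ} (he : e =O[atTop] fun n => (n : ℝ) ^ k) :
    Summable fun n : ℕ => e n * log (1 - (q : ℂ) ^ (n + 1)) :=
  summable_mul_log_one_sub hq.le hq1 he <| IsBigO.of_bound q <| Eventually.of_forall fun n => by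
    rw [norm_pow, norm_real, Real.norm_of_nonneg hq.le, Real.norm_of_nonneg (by positivity),
      pow_succ']

lemma div_ofReal_cpow_mul_cpow {a : ℂ} (ha : a ≠ 0) {b : ℝ} (hb : 0 < b) (c d : ℂ) :
    (a / b) ^ c * (b : ℂ) ^ d = exp (c * log a + (d - c) * log b) := by
  have hb' : (b : ℂ) ≠ 0 := ofReal_ne_zero.2 hb.ne'
  have hlog : log (a / b) = log a - log b := by
    rw [div_eq_mul_inv, ← ofReal_inv, log_mul_ofReal _ (inv_pos.2 hb) _ ha, Real.log_inv,
      ofReal_neg, ofReal_log hb.le]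
    ring
  rw [cpow_def_of_ne_zero (div_ne_zero ha hb'), cpow_def_of_ne_zero hb', hlog, ← exp_add]
  ring_nf

lemma one_sub_cpow_ne_zero {q : ℝ} (hq : 0 < q) (hq1 : q < 1) {w : ℂ} (hw : 0 < w.re) :
    1 - (q : ℂ) ^ w ≠ 0 := by
  refine sub_ne_zero.2 fun h => ?_
  have := congrArg norm h
  rw [norm_one, norm_cpow_eq_rpow_re_of_pos hq] at this
  exact (Real.rpow_lt_one hq.le hq1 hw).ne' this

/-- `qLogMG q r w` is the logarithm of `G_r(w + 1; q)` obtained by taking the principal logarithm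
of every factor of the product. -/
noncomputable def qLogMG (q : ℝ) (r : ℕ) (w : ℂ) : ℂ :=
  -genBinom w r * log (1 - q)
    + ∑' n : ℕ, qMGExponent r n * log (1 - (q : ℂ) ^ (w + (n + 1)))
    + ∑' n : ℕ, (qg r w (n + 1) - qMGExponent r n) * log (1 - (q : ℂ) ^ (n + 1))

lemma qMG_add_one_eq_exp {q : ℝ} (hq : 0 < q) (hq1 : q < 1) {r : ℕ} (hr : r ≠ 0) {w : ℂ}
    (hw : 0 < (w + 1).re) : qMG q r (w + 1) = exp (qLogMG q r w) := by
  have hfactor : ∀ n : ℕ,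
      ((1 - (q : ℂ) ^ (w + (n + 1))) / (1 - (q : ℂ) ^ (n + 1)))
          ^ ((-1 : ℂ) ^ r * (Nat.choose (n + 1 + r - 2) (r - 1))) *
        (1 - (q : ℂ) ^ (n + 1)) ^ (qg r w (n + 1))
      = exp (qMGExponent r n * log (1 - (q : ℂ) ^ (w + (n + 1)))
          + (qg r w (n + 1) - qMGExponent r n) * log (1 - (q : ℂ) ^ (n + 1))) := fun n => by
    have hqn : 0 < 1 - q ^ (n + 1) := sub_pos.2 (pow_lt_one₀ hq.le hq1 n.succ_ne_zero)
    have ha : 1 - (q : ℂ) ^ (w + (n + 1)) ≠ 0 :=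
      one_sub_cpow_ne_zero hq hq1 (by simp only [add_re, one_re, natCast_re] at hw ⊢; linarith)
    have h := div_ofReal_cpow_mul_cpow ha hqn (qMGExponent r n) (qg r w (n + 1))
    push_cast at h
    exact h
  have hA := summable_mul_log_one_sub_cpow hq hq1 w (isBigO_qMGExponent (k := r) hr (by omega))
  have hB := summable_mul_log_one_sub_pow hq hq1
    ((isBigO_qg (r := r) (k := r) w (by omega)).sub (isBigO_qMGExponent hr (by omega)))
  have hq1' : (1 : ℂ) - q ≠ 0 := sub_ne_zero.2 (by exact_mod_cast hq1.ne')
  simp only [qMG, if_neg hr, add_sub_cancel_right]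
  rw [tprod_congr hfactor, ← Function.comp_def cexp, (hA.add hB).hasSum.cexp.tprod_eq,
    hA.tsum_add hB, cpow_def_of_ne_zero hq1', ← exp_add, qLogMG, add_assoc, mul_comm]

lemma qMG_zero_add_one {q : ℝ} (hq : 0 < q) (hq1 : q < 1) {w : ℂ} (hw : 0 < (w + 1).re) :
    qMG q 0 (w + 1) = exp (log (1 - (q : ℂ) ^ (w + 1)) - log (1 - q)) := by
  have hq1' : (1 : ℂ) - q ≠ 0 := sub_ne_zero.2 (by exact_mod_cast hq1.ne')
  rw [qMG, if_pos rfl, exp_sub, exp_log (one_sub_cpow_ne_zero hq hq1 hw), exp_log hq1']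

lemma tsum_mul_log_one_sub_cpow_eq_zero_add {q : ℝ} (hq : 0 < q) (hq1 : q < 1) (w : ℂ)
    {e : ℕ → ℂ} {k : ℕ} (he : e =O[atTop] fun n => (n : ℝ) ^ k) :
    ∑' n : ℕ, e n * log (1 - (q : ℂ) ^ (w + (n + 1)))
      = e 0 * log (1 - (q : ℂ) ^ (w + 1))
        + ∑' n : ℕ, e (n + 1) * log (1 - (q : ℂ) ^ (w + 1 + (n + 1))) := by
  rw [(summable_mul_log_one_sub_cpow hq hq1 w he).tsum_eq_zero_add]
  congr 1
  · simp
  · exact tsum_congr fun n => by push_cast; ring_nf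

lemma qLogMG_one_add_one {q : ℝ} (hq : 0 < q) (hq1 : q < 1) (w : ℂ) :
    qLogMG q 1 (w + 1) = log (1 - (q : ℂ) ^ (w + 1)) - log (1 - q) + qLogMG q 1 w := by
  rw [qLogMG, qLogMG, tsum_mul_log_one_sub_cpow_eq_zero_add hq hq1 w
    (isBigO_qMGExponent (k := 0) one_ne_zero le_rfl)]
  simp only [qMGExponent_one, qg_one, genBinom_eq_choose, Ring.choose_one_right]
  ring

lemma qLogMG_add_two_add_one {q : ℝ} (hq : 0 < q) (hq1 : q < 1) (s : ℕ) (w : ℂ) :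
    qLogMG q (s + 2) (w + 1) = qLogMG q (s + 1) w + qLogMG q (s + 2) w := by
  have hE₁ := isBigO_qMGExponent (r := s + 1) (k := s + 1) (by omega) (by omega)
  have hE₂ := isBigO_qMGExponent (r := s + 2) (k := s + 1) (by omega) (by omega)
  have hA : ∑' n : ℕ, qMGExponent (s + 2) n * log (1 - (q : ℂ) ^ (w + 1 + (n + 1)))
      = ∑' n : ℕ, qMGExponent (s + 1) n * log (1 - (q : ℂ) ^ (w + (n + 1)))
        + ∑' n : ℕ, qMGExponent (s + 2) n * log (1 - (q : ℂ) ^ (w + (n + 1))) := by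
    rw [← (summable_mul_log_one_sub_cpow hq hq1 w hE₁).tsum_add
      (summable_mul_log_one_sub_cpow hq hq1 w hE₂)]
    simp only [← add_mul]
    rw [tsum_mul_log_one_sub_cpow_eq_zero_add hq hq1 w (hE₁.add hE₂), qMGExponent_add_two_zero,
      zero_mul, zero_add]
    simp only [qMGExponent_add_two_succ]
  have hB : ∑' n : ℕ, (qg (s + 2) (w + 1) (n + 1) - qMGExponent (s + 2) n)
        * log (1 - (q : ℂ) ^ (n + 1))
      = ∑' n : ℕ, (qg (s + 1) w (n + 1) - qMGExponent (s + 1) n) * log (1 - (q : ℂ) ^ (n + 1))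
        + ∑' n : ℕ, (qg (s + 2) w (n + 1) - qMGExponent (s + 2) n)
          * log (1 - (q : ℂ) ^ (n + 1)) := by
    rw [← (summable_mul_log_one_sub_pow hq hq1 ((isBigO_qg w (by omega)).sub hE₁)).tsum_add
      (summable_mul_log_one_sub_pow hq hq1 ((isBigO_qg w (by omega)).sub hE₂))]
    exact tsum_congr fun n => by rw [qg_add_two_add_one]; ring
  simp only [qLogMG, hA, hB, genBinom_succ_succ]
  ring

theorem stmt6 (q : ℝ) (hq : 0 < q) (hq1 : q < 1) (r : ℕ) (hr : 1 ≤ r) (z : ℂ) (hz : 0 < z.re) :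
    qMG q r (z + 1) = qMG q (r - 1) z * qMG q r z := by
  obtain ⟨w, rfl⟩ : ∃ w, z = w + 1 := ⟨z - 1, by ring⟩
  have hz' : 0 < (w + 1 + 1).re := by simp only [add_re, one_re] at hz ⊢; linarith
  rw [qMG_add_one_eq_exp hq hq1 (by omega) hz', qMG_add_one_eq_exp (r := r) hq hq1 (by omega) hz]
  obtain rfl | ⟨s, rfl⟩ : r = 1 ∨ ∃ s, r = s + 2 :=
    hr.eq_or_lt.imp Eq.symm fun h => ⟨r - 2, by omega⟩
  · rw [qMG_zero_add_one hq hq1 hz, ← exp_add, qLogMG_one_add_one hq hq1]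
  · rw [qMG_add_one_eq_exp hq hq1 (by omega) hz, ← exp_add, qLogMG_add_two_add_one hq hq1]
    rfl
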